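/- arXiv:1708.02428 — 4 statements merged into one kernel-verified Lean document; each statement's English description precedes it below -/
import Mathlib

section
/- Let 0 < α < 1 and n ≥ 1. Let y_1, …, y_n be independent real random variables with y_i Gaussian with mean μ_i and variance σ_i² > 0, and let q ∈ ℝ satisfy P(for all i ≠ j, |(y_i − μ_i) − (y_j − μ_j)| ≤ s_{ij}·q) ≥ 1 − α. Define the random bounds L_i = 1 + #{j ≠ i : y_i − y_j − s_{ij}·q > 0} and U_i = n − #{j ≠ i : y_i − y_j + s_{ij}·q ≤ 0}. Then P(for all i, L_i ≤ l_i and u_i ≤ U_i) ≥ 1 − α; i.e., Tukey's HSD produces simultaneous confidence intervals for the set-ranks at joint level 1 − α. -/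
/-!
On the event that every centred pairwise difference `(y i - μ i) - (y j - μ j)` lies within
`± s i j * q`, a pair declared significant by Tukey's HSD is ordered correctly:
`y i - y j > s i j * q` forces `μ j < μ i`, and `y i - y j ≤ -s i j * q` forces `μ i ≤ μ j`.
So on that event the counts defining `L i` and `U i` are dominated by those defining the
set-rank bounds, and the coverage probability is at least that of the event itself.
-/

open MeasureTheory ProbabilityTheory Finset

section RankBounds

variable {ι : Type*} [Fintype ι] [DecidableEq ι] (μ x : ι → ℝ) (w : ι → ι → ℝ) {i : ι}

theorem card_filter_sub_gt_le_card_filter_lt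
    (h : ∀ j, j ≠ i → |(x i - μ i) - (x j - μ j)| ≤ w i j) :
    (univ.filter fun j => j ≠ i ∧ 0 < x i - x j - w i j).card
      ≤ (univ.filter fun j => j ≠ i ∧ μ j < μ i).card := by
  refine card_le_card fun j hj => ?_
  simp only [mem_filter, mem_univ, true_and] at hj ⊢
  obtain ⟨hji, hpos⟩ := hj
  have := (le_abs_self _).trans (h j hji)
  exact ⟨hji, by linarith⟩

theorem card_filter_sub_add_nonpos_le_card_filter_le
    (h : ∀ j, j ≠ i → |(x i - μ i) - (x j - μ j)| ≤ w i j) :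
    (univ.filter fun j => j ≠ i ∧ x i - x j + w i j ≤ 0).card
      ≤ (univ.filter fun j => j ≠ i ∧ μ i ≤ μ j).card := by
  refine card_le_card fun j hj => ?_
  simp only [mem_filter, mem_univ, true_and] at hj ⊢
  obtain ⟨hji, hnonpos⟩ := hj
  have := neg_le_of_abs_le (h j hji)
  exact ⟨hji, by linarith⟩

end RankBounds

theorem stmt_0_general {n : ℕ} {Ω : Type*} [MeasurableSpace Ω]
    (P : Measure Ω)
    (μ σ : Fin n → ℝ)
    (y : Fin n → Ω → ℝ)
    (α : ℝ) (q : ℝ)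
    (hq : ENNReal.ofReal (1 - α) ≤
      P {ω | ∀ i j : Fin n, i ≠ j →
        |(y i ω - μ i) - (y j ω - μ j)| ≤ Real.sqrt ((σ i) ^ 2 + (σ j) ^ 2) * q}) :
    ENNReal.ofReal (1 - α) ≤
      P {ω | ∀ i : Fin n,
        1 + (Finset.univ.filter fun j => j ≠ i ∧
              0 < y i ω - y j ω - Real.sqrt ((σ i) ^ 2 + (σ j) ^ 2) * q).card
            ≤ 1 + (Finset.univ.filter fun j => j ≠ i ∧ μ j < μ i).card ∧
        n - (Finset.univ.filter fun j => j ≠ i ∧ μ i ≤ μ j).card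
            ≤ n - (Finset.univ.filter fun j => j ≠ i ∧
              y i ω - y j ω + Real.sqrt ((σ i) ^ 2 + (σ j) ^ 2) * q ≤ 0).card} := by
  refine hq.trans (measure_mono fun ω hω i => ?_)
  set w : Fin n → Fin n → ℝ := fun i j => Real.sqrt ((σ i) ^ 2 + (σ j) ^ 2) * q
  have hpair : ∀ j, j ≠ i → |(y i ω - μ i) - (y j ω - μ j)| ≤ w i j :=
    fun j hj => hω i j hj.symm
  exact ⟨Nat.add_le_add_left (card_filter_sub_gt_le_card_filter_lt μ (y · ω) w hpair) 1,
    Nat.sub_le_sub_left (card_filter_sub_add_nonpos_le_card_filter_le μ (y · ω) w hpair) n⟩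

/-- Tukey's HSD produces simultaneous confidence intervals for the set-ranks at joint
level `1 - α` : if `q` satisfies
`P(∀ i ≠ j, |(y i - μ i) - (y j - μ j)| ≤ s i j * q) ≥ 1 - α` with
`s i j = √(σ i ^ 2 + σ j ^ 2)`, then the random bounds
`L i = 1 + #{j ≠ i : y i - y j - s i j * q > 0}` and
`U i = n - #{j ≠ i : y i - y j + s i j * q ≤ 0}` satisfy
`P(∀ i, L i ≤ l i ∧ u i ≤ U i) ≥ 1 - α`, where `l i = 1 + #{j ≠ i : μ j < μ i}` and
`u i = n - #{j ≠ i : μ j ≥ μ i}` are the set-ranks. -/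
theorem stmt_0 {n : ℕ} (hn : 1 ≤ n) {Ω : Type*} [MeasurableSpace Ω]
    (P : Measure Ω) [IsProbabilityMeasure P]
    (μ σ : Fin n → ℝ) (hσ : ∀ i, 0 < σ i)
    (y : Fin n → Ω → ℝ) (hmeas : ∀ i, Measurable (y i))
    (hindep : iIndepFun y P)
    (hdist : ∀ i, P.map (y i) = gaussianReal (μ i) ⟨(σ i) ^ 2, sq_nonneg _⟩)
    (α : ℝ) (hα : α ∈ Set.Ioo (0 : ℝ) 1) (q : ℝ)
    (hq : ENNReal.ofReal (1 - α) ≤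
      P {ω | ∀ i j : Fin n, i ≠ j →
        |(y i ω - μ i) - (y j ω - μ j)| ≤ Real.sqrt ((σ i) ^ 2 + (σ j) ^ 2) * q}) :
    ENNReal.ofReal (1 - α) ≤
      P {ω | ∀ i : Fin n,
        1 + (Finset.univ.filter fun j => j ≠ i ∧
              0 < y i ω - y j ω - Real.sqrt ((σ i) ^ 2 + (σ j) ^ 2) * q).card
            ≤ 1 + (Finset.univ.filter fun j => j ≠ i ∧ μ j < μ i).card ∧
        n - (Finset.univ.filter fun j => j ≠ i ∧ μ i ≤ μ j).card
            ≤ n - (Finset.univ.filter fun j => j ≠ i ∧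
              y i ω - y j ω + Real.sqrt ((σ i) ^ 2 + (σ j) ^ 2) * q ≤ 0).card} :=
  stmt_0_general P μ σ y α q hq
end

section
/- (Sequential rejection principle.) Let (Ω, P) be a probability space, H a finite set of hypotheses, F ⊆ H the subset of false hypotheses, and for each h ∈ H let T_h : Ω → ℝ be a measurable statistic. Let q be a function from subsets of H to ℝ satisfying the monotonicity condition: A ⊆ B ⊆ H implies q(A) ≥ q(B). Assume the single-step condition P(there exists h ∈ H \ F with T_h > q(F)) ≤ α. Define the sequential algorithm by R_0(ω) = ∅ and R_{k+1}(ω) = R_k(ω) ∪ {h ∈ H : T_h(ω) > q(R_k(ω))}. Then P(for all k, R_k(ω) ⊆ F) ≥ 1 − α; in particular, the probability that at the final step all rejected hypotheses are false ones exceeds 1 − α. -/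
open MeasureTheory

/-- The sequential rejection principle: if the critical value function `q` is monotone
(`A ⊆ B → q A ≥ q B`) and the single-step condition
`P(∃ h ∉ F, T h > q F) ≤ α` holds, then the sequential algorithm
`R 0 = ∅`, `R (k+1) = R k ∪ {h : T h > q (R k)}` rejects only false hypotheses
(members of `F`) at every step with probability at least `1 - α`. -/
theorem stmt_3 {ι : Type*} [Fintype ι] {Ω : Type*} [MeasurableSpace Ω]
    (P : Measure Ω) [IsProbabilityMeasure P]
    (F : Set ι) (T : ι → Ω → ℝ) (hT : ∀ h, Measurable (T h))
    (q : Set ι → ℝ) (hmono : ∀ A B : Set ι, A ⊆ B → q B ≤ q A)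
    (α : ℝ) (hα : α ∈ Set.Ioo (0 : ℝ) 1)
    (hstep : P {ω | ∃ h, h ∉ F ∧ q F < T h ω} ≤ ENNReal.ofReal α)
    (R : ℕ → Ω → Set ι)
    (hR0 : ∀ ω, R 0 ω = ∅)
    (hRs : ∀ k ω, R (k + 1) ω = R k ω ∪ {h | q (R k ω) < T h ω}) :
    ENNReal.ofReal (1 - α) ≤ P {ω | ∀ k, R k ω ⊆ F} := by
  set B : Set Ω := {ω | ∃ h, h ∉ F ∧ q F < T h ω} with hB
  -- On Bᶜ, all R k ω ⊆ F
  have hsub : Bᶜ ⊆ {ω | ∀ k, R k ω ⊆ F} := by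
    intro ω hω k
    induction k with
    | zero => rw [hR0]; exact Set.empty_subset _
    | succ k ih =>
      rw [hRs]
      intro h hh
      rcases hh with hh | hh
      · exact ih hh
      · by_contra hhF
        exact hω ⟨h, hhF, lt_of_le_of_lt (hmono _ _ ih) hh⟩
  have h1 : (1 : ENNReal) ≤ P B + P Bᶜ := by
    have := measure_union_le (μ := P) B Bᶜ
    rw [Set.union_compl_self, measure_univ] at this
    exact this
  calc ENNReal.ofReal (1 - α) ≤ 1 - ENNReal.ofReal α := by
        rw [ENNReal.ofReal_sub _ (le_of_lt hα.1), ENNReal.ofReal_one]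
    _ ≤ 1 - P B := by exact tsub_le_tsub_left hstep 1
    _ ≤ P Bᶜ := by
        rw [tsub_le_iff_left]
        calc (1 : ENNReal) ≤ P B + P Bᶜ := h1
          _ = P B + P Bᶜ := rfl
    _ ≤ P {ω | ∀ k, R k ω ⊆ F} := measure_mono hsub
end

section
/- (FWER control of the sequential-rejective variant of Tukey's HSD.) Let y_1, …, y_n be independent real random variables with y_i Gaussian with mean μ_i and variance σ_i² > 0, let H be the set of all ordered pairs (i,j), i ≠ j, and for A ⊆ H with H \ A nonempty let q(A) be the (1−α)-quantile of max over (i,j) ∈ H \ A of (Ỹ_i − Ỹ_j)/s_{ij}, where Ỹ_1, …, Ỹ_n are independent centered Gaussians with variances σ_i². Define R_0(ω) = ∅ and R_{k+1}(ω) = R_k(ω) ∪ {(i,j) ∈ H : (y_i(ω) − y_j(ω))/s_{ij} > q(R_k(ω))}. Then P(for all k, R_k(ω) ⊆ {(i,j) : μ_i > μ_j}) ≥ 1 − α, i.e., with probability at least 1 − α every hypothesis H_{i,j} : μ_i ≤ μ_j ever rejected by the algorithm is false. -/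
open MeasureTheory ProbabilityTheory Set Filter
open scoped Topology

/-!
Let `F` be the set of false hypotheses `μ j < μ i` and `T = H \ F` the true ones. The centred
observations `y i - μ i` have the same joint law as `Ỹ`, so the maximum `M` of their standardized
differences over `T` satisfies `M ≤ q F` with probability at least `1 - α`. On that event no true
hypothesis is ever rejected: while `R k ⊆ F`, the set `H \ R k` contains `T`, so the quantile
`q (R k)` dominates `q F ≥ M`, and `M` dominates `(y i - y j) / s i j` for `(i, j) ∈ T` because
`μ i ≤ μ j` there.
-/

section Quantile

variable {c : ℝ}

lemma nonempty_setOf_le_cdf (ν : Measure ℝ) [IsProbabilityMeasure ν] (hc : c < 1) :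
    {x | c ≤ cdf ν x}.Nonempty :=
  ((tendsto_cdf_atTop ν).eventually (eventually_gt_nhds hc)).exists.imp fun _ ↦ le_of_lt

lemma bddBelow_setOf_le_cdf (ν : Measure ℝ) (hc : 0 < c) : BddBelow {x | c ≤ cdf ν x} := by
  obtain ⟨x₀, hx₀⟩ := eventually_atBot.mp ((tendsto_cdf_atBot ν).eventually (eventually_lt_nhds hc))
  exact ⟨x₀, fun x hx ↦ not_lt.mp fun hlt ↦ (hx₀ x hlt.le).not_ge hx⟩

lemma le_cdf_sInf_setOf_le_cdf (ν : Measure ℝ) [IsProbabilityMeasure ν] (hc : c < 1) :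
    c ≤ cdf ν (sInf {x | c ≤ cdf ν x}) := by
  have hright : Tendsto (cdf ν) (𝓝[>] _) (𝓝 (cdf ν (sInf {x | c ≤ cdf ν x}))) :=
    ((cdf ν).right_continuous _).mono_left (nhdsWithin_mono _ Ioi_subset_Ici_self)
  refine ge_of_tendsto hright (eventually_of_mem self_mem_nhdsWithin fun x hx ↦ ?_)
  obtain ⟨s, hs, hsx⟩ := exists_lt_of_csInf_lt (nonempty_setOf_le_cdf ν hc) hx
  exact hs.trans (monotone_cdf ν hsx.le)

variable {Ω : Type*} [MeasurableSpace Ω]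

noncomputable def quantile (P : Measure Ω) (X : Ω → ℝ) (c : ℝ) : ℝ :=
  sInf {x : ℝ | ENNReal.ofReal c ≤ P {ω | X ω ≤ x}}

variable {P : Measure Ω} [IsProbabilityMeasure P] {X Y : Ω → ℝ}

lemma setOf_ofReal_le_measure_le_eq (hX : AEMeasurable X P) (c : ℝ) :
    {x : ℝ | ENNReal.ofReal c ≤ P {ω | X ω ≤ x}} = {x | c ≤ cdf (P.map X) x} := by
  have : IsProbabilityMeasure (P.map X) := Measure.isProbabilityMeasure_map hX
  ext x
  rw [mem_ofPred_eq, mem_ofPred_eq, ← ENNReal.ofReal_le_ofReal_iff (cdf_nonneg _ x), ofReal_cdf,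
    Measure.map_apply_of_aemeasurable hX measurableSet_Iic]
  rfl

lemma ofReal_le_measure_le_quantile (hX : AEMeasurable X P) (hc : c < 1) :
    ENNReal.ofReal c ≤ P {ω | X ω ≤ quantile P X c} := by
  have : IsProbabilityMeasure (P.map X) := Measure.isProbabilityMeasure_map hX
  have h := le_cdf_sInf_setOf_le_cdf (P.map X) hc
  rw [← setOf_ofReal_le_measure_le_eq hX] at h
  rw [← ENNReal.ofReal_le_ofReal_iff (cdf_nonneg _ _), ofReal_cdf,
    Measure.map_apply_of_aemeasurable hX measurableSet_Iic] at h
  exact h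

lemma quantile_mono (hX : AEMeasurable X P) (hY : AEMeasurable Y P) (hXY : X ≤ Y)
    (hc₀ : 0 < c) (hc₁ : c < 1) : quantile P X c ≤ quantile P Y c := by
  have : IsProbabilityMeasure (P.map Y) := Measure.isProbabilityMeasure_map hY
  refine csInf_le_csInf ?_ ?_ fun x hx ↦ hx.trans (measure_mono fun ω hω ↦ (hXY ω).trans hω)
  · rw [setOf_ofReal_le_measure_le_eq hX]
    exact bddBelow_setOf_le_cdf _ hc₀
  · rw [setOf_ofReal_le_measure_le_eq hY]
    exact nonempty_setOf_le_cdf _ hc₁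

end Quantile

section PairStatistics

variable {ι : Type*}

noncomputable def pairStat (σ v : ι → ℝ) (p : ι × ι) : ℝ :=
  (v p.1 - v p.2) / √(σ p.1 ^ 2 + σ p.2 ^ 2)

noncomputable def maxPairStat (σ : ι → ℝ) (T : Set (ι × ι)) (v : ι → ℝ) : ℝ :=
  sSup (pairStat σ v '' T)

lemma pairStat_le_pairStat_sub {σ μ : ι → ℝ} (v : ι → ℝ) {p : ι × ι} (hp : μ p.1 ≤ μ p.2) :
    pairStat σ v p ≤ pairStat σ (v - μ) p :=
  div_le_div_of_nonneg_right (by simp only [Pi.sub_apply]; linarith) (Real.sqrt_nonneg _)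

variable [Finite ι] (σ : ι → ℝ)

lemma measurable_maxPairStat (T : Set (ι × ι)) : Measurable (maxPairStat σ T) := by
  have : maxPairStat σ T = fun v ↦ ⨆ p : T, pairStat σ v p :=
    funext fun v ↦ by rw [maxPairStat, image_eq_range]; rfl
  rw [this]
  exact Measurable.iSup fun p ↦ by unfold pairStat; fun_prop

lemma pairStat_le_maxPairStat {T : Set (ι × ι)} (v : ι → ℝ) {p : ι × ι} (hp : p ∈ T) :
    pairStat σ v p ≤ maxPairStat σ T v :=
  le_csSup (T.toFinite.image _).bddAbove (mem_image_of_mem _ hp)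

lemma maxPairStat_mono {T T' : Set (ι × ι)} (hT : T.Nonempty) (h : T ⊆ T') (v : ι → ℝ) :
    maxPairStat σ T v ≤ maxPairStat σ T' v :=
  csSup_le_csSup (T'.toFinite.image _).bddAbove (hT.image _) (image_mono h)

lemma quantile_maxPairStat_mono {Ω : Type*} [MeasurableSpace Ω] {P : Measure Ω}
    [IsProbabilityMeasure P] {Y : ι → Ω → ℝ} (hY : ∀ i, Measurable (Y i)) {T T' : Set (ι × ι)}
    (hT : T.Nonempty) (h : T ⊆ T') {c : ℝ} (hc₀ : 0 < c) (hc₁ : c < 1) :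
    quantile P (fun ω ↦ maxPairStat σ T (Y · ω)) c ≤
      quantile P (fun ω ↦ maxPairStat σ T' (Y · ω)) c :=
  quantile_mono ((measurable_maxPairStat σ T).comp (measurable_pi_lambda _ hY)).aemeasurable
    ((measurable_maxPairStat σ T').comp (measurable_pi_lambda _ hY)).aemeasurable
    (fun _ ↦ maxPairStat_mono σ hT h _) hc₀ hc₁

end PairStatistics

theorem sequentialRejection_subset {ι : Type*} {H F : Set ι} {t : ι → ℝ} {q : Set ι → ℝ}
    {R : ℕ → Set ι} (hR0 : R 0 = ∅) (hRs : ∀ k, R (k + 1) = R k ∪ {p | p ∈ H ∧ q (R k) < t p})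
    (h : ∀ A ⊆ F, ∀ p ∈ H \ F, t p ≤ q A) (k : ℕ) : R k ⊆ F := by
  induction k with
  | zero => simp [hR0]
  | succ k ih =>
    rw [hRs k]
    refine union_subset ih fun p ⟨hpH, hp⟩ ↦ ?_
    by_contra hpF
    exact (h _ ih p ⟨hpH, hpF⟩).not_gt hp

lemma identDistrib_sub_const_of_map_eq_gaussianReal {Ω Ω' : Type*} [MeasurableSpace Ω]
    [MeasurableSpace Ω'] {P : Measure Ω} {P' : Measure Ω'} {X : Ω → ℝ} {Y : Ω' → ℝ}
    (hX : Measurable X) (hY : Measurable Y) {m : ℝ} {v : NNReal}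
    (hXdist : P.map X = gaussianReal m v) (hYdist : P'.map Y = gaussianReal 0 v) :
    IdentDistrib (fun ω ↦ X ω - m) Y P P' where
  aemeasurable_fst := (hX.sub_const m).aemeasurable
  aemeasurable_snd := hY.aemeasurable
  map_eq := by
    rw [hYdist, ← sub_self m, ← gaussianReal_map_sub_const, ← hXdist,
      Measure.map_map (measurable_sub_const m) hX]
    rfl

theorem stmt_6_general {n : ℕ} {Ω Ω' : Type*} [MeasurableSpace Ω] [MeasurableSpace Ω']
    (P : Measure Ω) [IsProbabilityMeasure P] (P' : Measure Ω') [IsProbabilityMeasure P']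
    (μ σ : Fin n → ℝ)
    (y : Fin n → Ω → ℝ) (hymeas : ∀ i, Measurable (y i))
    (hyindep : iIndepFun y P)
    (hydist : ∀ i, P.map (y i) = gaussianReal (μ i) ⟨(σ i) ^ 2, sq_nonneg _⟩)
    (Yt : Fin n → Ω' → ℝ) (hYmeas : ∀ i, Measurable (Yt i))
    (hYindep : iIndepFun Yt P')
    (hYdist : ∀ i, P'.map (Yt i) = gaussianReal 0 ⟨(σ i) ^ 2, sq_nonneg _⟩)
    (α : ℝ) (hα : α ∈ Set.Ioo (0 : ℝ) 1)
    (q : Set (Fin n × Fin n) → ℝ)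
    (hq : ∀ A : Set (Fin n × Fin n), ({p : Fin n × Fin n | p.1 ≠ p.2} \ A).Nonempty →
      q A = sInf {x : ℝ | ENNReal.ofReal (1 - α) ≤
        P' {ω | sSup ((fun p : Fin n × Fin n =>
            (Yt p.1 ω - Yt p.2 ω) / Real.sqrt ((σ p.1) ^ 2 + (σ p.2) ^ 2)) ''
            ({p : Fin n × Fin n | p.1 ≠ p.2} \ A)) ≤ x}})
    (R : ℕ → Ω → Set (Fin n × Fin n))
    (hR0 : ∀ ω, R 0 ω = ∅)
    (hRs : ∀ k ω, R (k + 1) ω = R k ω ∪ {p : Fin n × Fin n | p.1 ≠ p.2 ∧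
      q (R k ω) < (y p.1 ω - y p.2 ω) / Real.sqrt ((σ p.1) ^ 2 + (σ p.2) ^ 2)}) :
    ENNReal.ofReal (1 - α) ≤
      P {ω | ∀ k, R k ω ⊆ {p : Fin n × Fin n | μ p.2 < μ p.1}} := by
  have hc₀ : 0 < 1 - α := sub_pos.mpr hα.2
  have hc₁ : 1 - α < 1 := sub_lt_self 1 hα.1
  set H : Set (Fin n × Fin n) := {p | p.1 ≠ p.2}
  set F : Set (Fin n × Fin n) := {p | μ p.2 < μ p.1}
  have hqA (A : Set (Fin n × Fin n)) (hA : (H \ A).Nonempty) :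
      q A = quantile P' (fun ω ↦ maxPairStat σ (H \ A) (Yt · ω)) (1 - α) := hq A hA
  rcases (H \ F).eq_empty_or_nonempty with hT | hT
  · have hall : {ω | ∀ k, R k ω ⊆ F} = univ := eq_univ_of_forall fun ω ↦
      sequentialRejection_subset (hR0 ω) (hRs · ω) fun _ _ p hp ↦ absurd (hT ▸ hp) (notMem_empty p)
    rw [hall, measure_univ]
    exact ENNReal.ofReal_le_one.mpr hc₁.le
  have hgood : {ω | maxPairStat σ (H \ F) (fun i ↦ y i ω - μ i) ≤ q F} ⊆ {ω | ∀ k, R k ω ⊆ F} :=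
    fun ω hω ↦ sequentialRejection_subset (hR0 ω) (hRs · ω) fun A hA p hp ↦ calc
      pairStat σ (y · ω) p ≤ pairStat σ (fun i ↦ y i ω - μ i) p :=
        pairStat_le_pairStat_sub _ (not_lt.mp hp.2)
      _ ≤ maxPairStat σ (H \ F) (fun i ↦ y i ω - μ i) := pairStat_le_maxPairStat σ _ hp
      _ ≤ q F := hω
      _ ≤ q A := by
        rw [hqA F hT, hqA A (hT.mono (sdiff_subset_sdiff_right hA))]
        exact quantile_maxPairStat_mono σ hYmeas hT (sdiff_subset_sdiff_right hA) hc₀ hc₁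
  have hident : IdentDistrib (fun ω ↦ maxPairStat σ (H \ F) (fun i ↦ y i ω - μ i))
      (fun ω ↦ maxPairStat σ (H \ F) (Yt · ω)) P P' :=
    (IdentDistrib.pi (fun i ↦ identDistrib_sub_const_of_map_eq_gaussianReal (hymeas i)
      (hYmeas i) (hydist i) (hYdist i)) (hyindep.comp _ fun i ↦ measurable_sub_const (μ i))
      hYindep).comp (measurable_maxPairStat σ _)
  calc ENNReal.ofReal (1 - α) ≤ P' {ω | maxPairStat σ (H \ F) (Yt · ω) ≤ q F} := by
        rw [hqA F hT]
        exact ofReal_le_measure_le_quantile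
          ((measurable_maxPairStat σ _).comp (measurable_pi_lambda _ hYmeas)).aemeasurable hc₁
    _ = P {ω | maxPairStat σ (H \ F) (fun i ↦ y i ω - μ i) ≤ q F} :=
        (hident.measure_mem_eq measurableSet_Iic).symm
    _ ≤ _ := measure_mono hgood

/-- FWER control of the sequential-rejective variant of Tukey's HSD: with critical
values `q A` given by the `(1-α)`-quantile of `max_{(i,j) ∈ H \ A} (Ỹ i - Ỹ j)/s i j`
(for independent centered Gaussians `Ỹ i` with variances `σ i ^ 2`), the recursion
`R 0 = ∅`, `R (k+1) = R k ∪ {(i,j) ∈ H : (y i - y j)/s i j > q (R k)}` satisfies: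
with probability at least `1 - α`, every rejected hypothesis `H_{i,j} : μ i ≤ μ j`
is false, i.e. `∀ k, R k ⊆ {(i,j) : μ i > μ j}`. -/
theorem stmt_6 {n : ℕ} {Ω Ω' : Type*} [MeasurableSpace Ω] [MeasurableSpace Ω']
    (P : Measure Ω) [IsProbabilityMeasure P] (P' : Measure Ω') [IsProbabilityMeasure P']
    (μ σ : Fin n → ℝ) (hσ : ∀ i, 0 < σ i)
    (y : Fin n → Ω → ℝ) (hymeas : ∀ i, Measurable (y i))
    (hyindep : iIndepFun y P)
    (hydist : ∀ i, P.map (y i) = gaussianReal (μ i) ⟨(σ i) ^ 2, sq_nonneg _⟩)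
    (Yt : Fin n → Ω' → ℝ) (hYmeas : ∀ i, Measurable (Yt i))
    (hYindep : iIndepFun Yt P')
    (hYdist : ∀ i, P'.map (Yt i) = gaussianReal 0 ⟨(σ i) ^ 2, sq_nonneg _⟩)
    (α : ℝ) (hα : α ∈ Set.Ioo (0 : ℝ) 1)
    (q : Set (Fin n × Fin n) → ℝ)
    (hq : ∀ A : Set (Fin n × Fin n), ({p : Fin n × Fin n | p.1 ≠ p.2} \ A).Nonempty →
      q A = sInf {x : ℝ | ENNReal.ofReal (1 - α) ≤
        P' {ω | sSup ((fun p : Fin n × Fin n =>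
            (Yt p.1 ω - Yt p.2 ω) / Real.sqrt ((σ p.1) ^ 2 + (σ p.2) ^ 2)) ''
            ({p : Fin n × Fin n | p.1 ≠ p.2} \ A)) ≤ x}})
    (R : ℕ → Ω → Set (Fin n × Fin n))
    (hR0 : ∀ ω, R 0 ω = ∅)
    (hRs : ∀ k ω, R (k + 1) ω = R k ω ∪ {p : Fin n × Fin n | p.1 ≠ p.2 ∧
      q (R k ω) < (y p.1 ω - y p.2 ω) / Real.sqrt ((σ p.1) ^ 2 + (σ p.2) ^ 2)}) :
    ENNReal.ofReal (1 - α) ≤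
      P {ω | ∀ k, R k ω ⊆ {p : Fin n × Fin n | μ p.2 < μ p.1}} :=
  stmt_6_general P P' μ σ y hymeas hyindep hydist Yt hYmeas hYindep hYdist α hα q hq R hR0 hRs
end

section
/- Let n ≥ 2, μ : Fin n → ℝ, and on a probability space (Ω, P) let L_i, U_i : Ω → ℤ be random integer bounds satisfying the simultaneous coverage P(for all i, L_i ≤ l_i and u_i ≤ U_i) ≥ 1 − α. Define the estimated rankability R̂_n(ω) = 1 − (1/(n(n−1))) · Σ_{i=1}^n (U_i(ω) − L_i(ω)). Then P(R̂_n ≤ R_n) ≥ 1 − α, i.e., the estimated rankability underestimates the true rankability R_n with probability at least 1 − α, so [R̂_n, 1] is a (1−α) confidence interval for R_n. -/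
open MeasureTheory

/-- If random integer bounds `L i, U i` cover the set-ranks simultaneously with
probability at least `1 - α`, then the estimated rankability
`R̂_n = 1 - (1/(n(n-1))) ∑ i (U i - L i)` underestimates the true rankability
`R_n = 1 - (1/(n(n-1))) ∑ i (u i - l i)` with probability at least `1 - α`.
Here `l i = 1 + #{j ≠ i : μ j < μ i}` and `u i = n - #{j ≠ i : μ j ≥ μ i}`. -/
theorem stmt_12 {n : ℕ} (hn : 2 ≤ n) {Ω : Type*} [MeasurableSpace Ω]
    (P : Measure Ω) [IsProbabilityMeasure P]
    (μ : Fin n → ℝ) (α : ℝ) (hα : α ∈ Set.Ioo (0 : ℝ) 1)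
    (L U : Fin n → Ω → ℤ)
    (hcov : ENNReal.ofReal (1 - α) ≤
      P {ω | ∀ i : Fin n,
        L i ω ≤ ((1 + (Finset.univ.filter fun j => j ≠ i ∧ μ j < μ i).card : ℕ) : ℤ) ∧
        ((n - (Finset.univ.filter fun j => j ≠ i ∧ μ i ≤ μ j).card : ℕ) : ℤ) ≤ U i ω}) :
    ENNReal.ofReal (1 - α) ≤
      P {ω | 1 - (1 / ((n : ℝ) * ((n : ℝ) - 1))) * ∑ i : Fin n, ((U i ω : ℝ) - (L i ω : ℝ))
          ≤ 1 - (1 / ((n : ℝ) * ((n : ℝ) - 1))) *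
              ∑ i : Fin n,
                (((n - (Finset.univ.filter fun j => j ≠ i ∧ μ i ≤ μ j).card : ℕ) : ℝ)
                  - ((1 + (Finset.univ.filter fun j => j ≠ i ∧ μ j < μ i).card : ℕ) : ℝ))} := by
  refine le_trans hcov (P.mono ?_)
  intro ω hω
  simp only [Set.mem_setOf_eq] at hω ⊢
  have hc : 0 ≤ 1 / ((n : ℝ) * ((n : ℝ) - 1)) := by
    apply div_nonneg zero_le_one
    have : (2:ℝ) ≤ (n:ℝ) := by exact_mod_cast hn
    nlinarith
  have hsum : ∑ i : Fin n,
      (((n - (Finset.univ.filter fun j => j ≠ i ∧ μ i ≤ μ j).card : ℕ) : ℝ)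
        - ((1 + (Finset.univ.filter fun j => j ≠ i ∧ μ j < μ i).card : ℕ) : ℝ))
      ≤ ∑ i : Fin n, ((U i ω : ℝ) - (L i ω : ℝ)) := by
    apply Finset.sum_le_sum
    intro i _
    obtain ⟨h1, h2⟩ := hω i
    have h1' : (L i ω : ℝ) ≤ ((1 + (Finset.univ.filter fun j => j ≠ i ∧ μ j < μ i).card : ℕ) : ℝ) := by
      exact_mod_cast h1
    have h2' : ((n - (Finset.univ.filter fun j => j ≠ i ∧ μ i ≤ μ j).card : ℕ) : ℝ) ≤ (U i ω : ℝ) := by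
      exact_mod_cast h2
    linarith
  nlinarith [mul_le_mul_of_nonneg_left hsum hc]
end
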